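/- arXiv:2202.11193 — 6 statements merged into one kernel-verified Lean document; each statement's English description precedes it below -/
import Mathlib

section
/- Let 0 < a < 1 and let f : ℝ → ℂ be a Schwartz function with C_a(f) < ∞ and C_a(f̂) < ∞. Then for every integer k ≥ 1 the k-th derivative of f satisfies the L² bound ‖D^k f‖_{L²(ℝ)} ≤ (2π)^k (k/(2πa))^{k/2} e^{-k/2} · C_a(f̂). -/
/-!
By Plancherel, `‖D^k f‖₂ = ‖(2π|ξ|)^k f̂‖₂`. The multiplier is dominated by the Gaussian weight:
`|ξ|^k e^{-πaξ²}` is maximal at `ξ² = k/(2πa)`, so `|ξ|^k ≤ (k/(2πa))^{k/2} e^{-k/2} e^{πaξ²}`,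
and squaring turns `e^{πaξ²}` into the weight `e^{2aπξ²}` of `C_a(f̂)`.
-/

open MeasureTheory Real FourierTransform

namespace SchwartzMap

variable {𝕜 F : Type*} [RCLike 𝕜] [NormedAddCommGroup F] [NormedSpace ℝ F] [NormedSpace 𝕜 F]

theorem coe_iterate_derivCLM (f : 𝓢(ℝ, F)) (n : ℕ) :
    ⇑((derivCLM 𝕜 F)^[n] f) = iteratedDeriv n f := by
  induction n with
  | zero => rfl
  | succ n ih =>
    ext x
    rw [Function.iterate_succ_apply', derivCLM_apply, ih, iteratedDeriv_succ]

theorem integrable_iteratedDeriv (f : 𝓢(ℝ, F)) (n : ℕ) : Integrable (iteratedDeriv n f) := by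
  rw [← coe_iterate_derivCLM (𝕜 := ℝ)]
  exact integrable _

variable {H : Type*} [NormedAddCommGroup H] [InnerProductSpace ℂ H] [CompleteSpace H]

theorem integral_norm_sq_iteratedDeriv (f : 𝓢(ℝ, H)) (n : ℕ) :
    ∫ x, ‖iteratedDeriv n f x‖ ^ 2 = ∫ ξ, ((2 * π * |ξ|) ^ n * ‖𝓕 (f : ℝ → H) ξ‖) ^ 2 := by
  rw [← coe_iterate_derivCLM (𝕜 := ℂ), ← integral_norm_sq_fourier, fourier_coe,
    coe_iterate_derivCLM, Real.fourier_iteratedDeriv (N := ⊤) (f.smooth ⊤)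
      (fun k _ => f.integrable_iteratedDeriv k) le_top]
  simp [norm_smul, mul_pow, abs_of_pos pi_pos]

end SchwartzMap

theorem Real.rpow_le_rpow_mul_exp_sub {y s : ℝ} (hy : 0 ≤ y) (hs : 0 ≤ s) :
    y ^ s ≤ s ^ s * exp (y - s) := by
  rcases hs.eq_or_lt with rfl | hs
  · simpa using one_le_exp hy
  have hys : y / s ≤ exp (y / s - 1) := by linarith [add_one_le_exp (y / s - 1)]
  calc y ^ s = s ^ s * (y / s) ^ s := by
        rw [div_rpow hy hs.le, mul_div_cancel₀ _ (rpow_pos_of_pos hs s).ne']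
    _ ≤ s ^ s * exp (y / s - 1) ^ s := by gcongr
    _ = s ^ s * exp (y - s) := by
        rw [← exp_mul, sub_mul, div_mul_cancel₀ _ hs.ne', one_mul]

theorem abs_pow_le_mul_exp_mul_sq {c : ℝ} (hc : 0 < c) (k : ℕ) (t : ℝ) :
    |t| ^ k ≤ ((k : ℝ) / (2 * c)) ^ ((k : ℝ) / 2) * exp (-(k : ℝ) / 2) * exp (c * t ^ 2) := by
  have hpow : (c * t ^ 2) ^ ((k : ℝ) / 2) = c ^ ((k : ℝ) / 2) * |t| ^ k := by
    rw [mul_rpow hc.le (sq_nonneg t), ← sq_abs, ← rpow_natCast_mul (abs_nonneg t),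
      Nat.cast_two, mul_div_cancel₀ _ two_ne_zero, rpow_natCast]
  have key := rpow_le_rpow_mul_exp_sub (by positivity : 0 ≤ c * t ^ 2)
    (by positivity : (0 : ℝ) ≤ k / 2)
  rw [hpow, ← le_div_iff₀' (by positivity)] at key
  calc |t| ^ k ≤ (k / 2 : ℝ) ^ ((k : ℝ) / 2) * exp (c * t ^ 2 - k / 2) / c ^ ((k : ℝ) / 2) := key
    _ = _ := by
      rw [mul_comm 2 c, ← div_div, div_right_comm, div_rpow (by positivity) hc.le,
        sub_eq_neg_add, exp_add, neg_div]
      ring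

theorem stmt_2_general (a : ℝ) (ha0 : 0 < a) (f : SchwartzMap ℝ ℂ)
    (hCfhat : Integrable (fun ξ : ℝ =>
      ‖FourierTransform.fourier (⇑f : ℝ → ℂ) ξ‖ ^ 2 * Real.exp (2 * a * π * ξ ^ 2))) :
    ∀ k : ℕ, 1 ≤ k →
      (∫ x : ℝ, ‖iteratedDeriv k (⇑f) x‖ ^ 2) ^ ((1 : ℝ) / 2) ≤
        (2 * π) ^ k * ((k : ℝ) / (2 * π * a)) ^ ((k : ℝ) / 2) * Real.exp (-(k : ℝ) / 2) *
          (∫ ξ : ℝ, ‖FourierTransform.fourier (⇑f : ℝ → ℂ) ξ‖ ^ 2 *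
            Real.exp (2 * a * π * ξ ^ 2)) ^ ((1 : ℝ) / 2) := by
  intro k _
  set C := (2 * π) ^ k * ((k : ℝ) / (2 * π * a)) ^ ((k : ℝ) / 2) * exp (-(k : ℝ) / 2)
  have hmultiplier (ξ : ℝ) : (2 * π * |ξ|) ^ k ≤ C * exp (π * a * ξ ^ 2) := by
    have := abs_pow_le_mul_exp_mul_sq (by positivity : 0 < π * a) k ξ
    rw [← mul_assoc] at this
    rw [mul_pow]
    refine (mul_le_mul_of_nonneg_left this (by positivity)).trans_eq ?_
    simp only [C]
    ring
  have hpointwise (ξ : ℝ) : ((2 * π * |ξ|) ^ k * ‖𝓕 (⇑f) ξ‖) ^ 2 ≤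
      C ^ 2 * (‖𝓕 (⇑f) ξ‖ ^ 2 * exp (2 * a * π * ξ ^ 2)) := by
    calc ((2 * π * |ξ|) ^ k * ‖𝓕 (⇑f) ξ‖) ^ 2
        ≤ (C * exp (π * a * ξ ^ 2) * ‖𝓕 (⇑f) ξ‖) ^ 2 := by gcongr; exact hmultiplier ξ
      _ = C ^ 2 * (‖𝓕 (⇑f) ξ‖ ^ 2 * exp (2 * a * π * ξ ^ 2)) := by
        rw [mul_pow, mul_pow, ← exp_nat_mul]; ring_nf
  have hL2 : ∫ x, ‖iteratedDeriv k f x‖ ^ 2 ≤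
      C ^ 2 * ∫ ξ, ‖𝓕 (⇑f) ξ‖ ^ 2 * exp (2 * a * π * ξ ^ 2) := by
    rw [f.integral_norm_sq_iteratedDeriv, ← integral_const_mul]
    exact integral_mono_of_nonneg (ae_of_all _ fun _ => by positivity) (hCfhat.const_mul _)
      (ae_of_all _ hpointwise)
  rw [← sqrt_eq_rpow, ← sqrt_eq_rpow, sqrt_le_left (by positivity), mul_pow,
    sq_sqrt (integral_nonneg fun _ => by positivity)]
  exact hL2

/-- `L²` bound on the `k`-th derivative of a Schwartz function belonging to the
Gaussian-weighted class:
`‖D^k f‖_{L²} ≤ (2π)^k (k/(2πa))^{k/2} e^{-k/2} C_a(f̂)`. -/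
theorem stmt_2 (a : ℝ) (ha0 : 0 < a) (ha1 : a < 1) (f : SchwartzMap ℝ ℂ)
    (hCf : Integrable (fun x : ℝ => ‖f x‖ ^ 2 * Real.exp (2 * a * π * x ^ 2)))
    (hCfhat : Integrable (fun ξ : ℝ =>
      ‖FourierTransform.fourier (⇑f : ℝ → ℂ) ξ‖ ^ 2 * Real.exp (2 * a * π * ξ ^ 2))) :
    ∀ k : ℕ, 1 ≤ k →
      (∫ x : ℝ, ‖iteratedDeriv k (⇑f) x‖ ^ 2) ^ ((1 : ℝ) / 2) ≤
        (2 * π) ^ k * ((k : ℝ) / (2 * π * a)) ^ ((k : ℝ) / 2) * Real.exp (-(k : ℝ) / 2) *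
          (∫ ξ : ℝ, ‖FourierTransform.fourier (⇑f : ℝ → ℂ) ξ‖ ^ 2 *
            Real.exp (2 * a * π * ξ ^ 2)) ^ ((1 : ℝ) / 2) :=
  stmt_2_general a ha0 f hCfhat
end

section
/- Let 0 < a < 1 and let f : ℝ → ℂ be a Schwartz function with C_a(f) < ∞ and C_a(f̂) < ∞. Then for every integer j ≥ 0 the j-th derivatives satisfy the uniform bounds ‖D^j f‖_{L^∞(ℝ)} ≤ (2π)^j A_j C_a(f̂) and ‖D^j f̂‖_{L^∞(ℝ)} ≤ (2π)^j A_j C_a(f), where A_j = 2^{-j} a^{-j/2} √((2j-1)!!) (2a)^{-1/4} and (2j-1)!! denotes the odd double factorial (with (-1)!! = 1). -/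
/-!
Differentiating under the Fourier integral gives `D^j ĝ = 𝓕((-2πi x)^j g)`, hence
`‖D^j ĝ‖_∞ ≤ (2π)^j ∫ |x|^j ‖g x‖`. Writing `|x|^j ‖g x‖ = (|x|^j e^{-aπx²}) (‖g x‖ e^{aπx²})`,
Cauchy–Schwarz bounds this integral by `C_a(g)` times the square root of the Gaussian moment
`∫ x^{2j} e^{-2aπx²} = (2j-1)‼ (2a)^{-1/2} (4aπ)^{-j}`, i.e. by `π^{-j/2} A_j C_a(g) ≤ A_j C_a(g)`.
This is the bound for `f̂` (take `g = f`); the bound for `f` follows with `g = f̂`, since Fourier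
inversion gives `f x = 𝓕 f̂ (-x)`.
-/

open MeasureTheory Real FourierTransform
open scoped Nat

theorem integrable_pow_mul_exp_neg_mul_sq {b : ℝ} (hb : 0 < b) (n : ℕ) :
    Integrable fun x : ℝ => x ^ n * exp (-b * x ^ 2) := by
  simpa [rpow_natCast] using
    integrable_rpow_mul_exp_neg_mul_sq hb (s := n) (by linarith [n.cast_nonneg (α := ℝ)])

theorem integral_pow_two_mul_mul_exp_neg_mul_sq {b : ℝ} (hb : 0 < b) (j : ℕ) :
    ∫ x : ℝ, x ^ (2 * j) * exp (-b * x ^ 2) = (2 * j - 1)‼ * √(π / b) / (2 * b) ^ j := by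
  have hq : (-1 : ℝ) < 2 * j := by linarith [j.cast_nonneg (α := ℝ)]
  have habs (x : ℝ) : x ^ (2 * j) * exp (-b * x ^ 2)
      = |x| ^ (2 * j : ℝ) * exp (-b * |x| ^ (2 : ℝ)) := by
    rw [rpow_two, sq_abs, ← (even_two_mul j).pow_abs, ← rpow_natCast]
    push_cast
    rfl
  simp_rw [habs]
  rw [integral_comp_abs (f := fun y => y ^ (2 * j : ℝ) * exp (-b * y ^ (2 : ℝ))),
    integral_rpow_mul_exp_neg_mul_rpow two_pos hq hb,
    show ((2 * j : ℝ) + 1) / 2 = j + 1 / 2 by ring,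
    Gamma_nat_add_half, sqrt_div' _ hb.le, sqrt_eq_rpow b,
    show -((2 * j : ℝ) + 1) / 2 = -(j : ℝ) + -(1 / 2) by ring, rpow_add hb, rpow_neg hb.le,
    rpow_neg hb.le, rpow_natCast, mul_pow]
  field_simp

theorem sqrt_integral_pow_two_mul_mul_exp_neg_le {a : ℝ} (ha : 0 < a) (j : ℕ) :
    (∫ x : ℝ, x ^ (2 * j) * exp (-(2 * a * π) * x ^ 2)) ^ (1 / 2 : ℝ) ≤
      2 ^ (-(j : ℝ)) * a ^ (-(j : ℝ) / 2) * √((2 * j - 1)‼ : ℝ) * (2 * a) ^ (-(1 : ℝ) / 4) := by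
  have h2a : 0 < 2 * a := by positivity
  rw [integral_pow_two_mul_mul_exp_neg_mul_sq (by positivity), ← sqrt_eq_rpow, sqrt_le_iff]
  refine ⟨by positivity, ?_⟩
  have hsq : (2 ^ (-(j : ℝ)) * a ^ (-(j : ℝ) / 2) * √((2 * j - 1)‼ : ℝ) *
      (2 * a) ^ (-(1 : ℝ) / 4)) ^ 2 = (2 * j - 1)‼ * (2 * a) ^ (-(1 : ℝ) / 2) / (4 * a) ^ j := by
    rw [mul_pow, mul_pow, mul_pow, sq_sqrt (by positivity), ← rpow_mul_natCast zero_le_two,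
      ← rpow_mul_natCast ha.le, ← rpow_mul_natCast h2a.le,
      show -(j : ℝ) * (2 : ℕ) = -((2 * j : ℕ) : ℝ) by push_cast; ring,
      show -(j : ℝ) / 2 * (2 : ℕ) = -(j : ℝ) by push_cast; ring,
      show -(1 : ℝ) / 4 * (2 : ℕ) = -1 / 2 by norm_num, rpow_neg zero_le_two, rpow_neg ha.le,
      rpow_natCast, rpow_natCast, pow_mul, mul_pow]
    field_simp
    norm_num
  have hsqrt : √(π / (2 * a * π)) = (2 * a) ^ (-(1 : ℝ) / 2) := by
    rw [div_mul_cancel_right₀ pi_ne_zero, sqrt_inv, sqrt_eq_rpow, ← rpow_neg h2a.le, neg_div]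
  have hπ : 4 * a ≤ 4 * a * π := le_mul_of_one_le_right (by positivity) (by linarith [pi_gt_three])
  rw [hsq, hsqrt, show 2 * (2 * a * π) = 4 * a * π by ring]
  gcongr

theorem integral_mul_le_sqrt_mul_sqrt_of_nonneg {α : Type*} [MeasurableSpace α] {μ : Measure α}
    {F G : α → ℝ} (hF0 : 0 ≤ F) (hG0 : 0 ≤ G) (hFm : AEStronglyMeasurable F μ)
    (hGm : AEStronglyMeasurable G μ) (hF : Integrable (fun x => F x ^ 2) μ)
    (hG : Integrable (fun x => G x ^ 2) μ) :
    ∫ x, F x * G x ∂μ ≤ (∫ x, F x ^ 2 ∂μ) ^ (1 / 2 : ℝ) * (∫ x, G x ^ 2 ∂μ) ^ (1 / 2 : ℝ) := by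
  have hF2 : MemLp F (ENNReal.ofReal 2) μ := by
    rwa [ENNReal.ofReal_ofNat, memLp_two_iff_integrable_sq hFm]
  have hG2 : MemLp G (ENNReal.ofReal 2) μ := by
    rwa [ENNReal.ofReal_ofNat, memLp_two_iff_integrable_sq hGm]
  simpa only [rpow_two] using integral_mul_le_Lp_mul_Lq_of_nonneg HolderConjugate.two_two
    (Filter.Eventually.of_forall hF0) (Filter.Eventually.of_forall hG0) hF2 hG2

theorem integral_abs_pow_mul_norm_le {E : Type*} [NormedAddCommGroup E] {c : ℝ} (hc : 0 < c)
    (j : ℕ) {g : ℝ → E} (hg : AEStronglyMeasurable g)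
    (hC : Integrable fun x => ‖g x‖ ^ 2 * exp (c * x ^ 2)) :
    ∫ x, |x| ^ j * ‖g x‖ ≤ (∫ x, x ^ (2 * j) * exp (-c * x ^ 2)) ^ (1 / 2 : ℝ) *
      (∫ x, ‖g x‖ ^ 2 * exp (c * x ^ 2)) ^ (1 / 2 : ℝ) := by
  set F : ℝ → ℝ := fun x => |x| ^ j * exp (-(c / 2) * x ^ 2)
  set G : ℝ → ℝ := fun x => ‖g x‖ * exp (c / 2 * x ^ 2)
  have hFG (x : ℝ) : |x| ^ j * ‖g x‖ = F x * G x := by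
    simp only [F, G, mul_mul_mul_comm, ← exp_add, neg_mul, neg_add_cancel, exp_zero, mul_one]
  have hF2 (x : ℝ) : F x ^ 2 = x ^ (2 * j) * exp (-c * x ^ 2) := by
    rw [mul_pow, ← pow_mul, mul_comm j 2, (even_two_mul j).pow_abs, ← exp_nat_mul]
    ring_nf
  have hG2 (x : ℝ) : G x ^ 2 = ‖g x‖ ^ 2 * exp (c * x ^ 2) := by
    rw [mul_pow, ← exp_nat_mul]
    ring_nf
  simp_rw [hFG, ← hF2, ← hG2]
  refine integral_mul_le_sqrt_mul_sqrt_of_nonneg (fun x => by positivity) (fun x => by positivity)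
    (by fun_prop) (hg.norm.mul (by fun_prop)) ?_ ?_
  · simpa only [hF2] using integrable_pow_mul_exp_neg_mul_sq hc (2 * j)
  · simpa only [hG2] using hC

theorem norm_iteratedDeriv_fourier_le {E : Type*} [NormedAddCommGroup E] [NormedSpace ℂ E]
    {g : ℝ → E} {n : ℕ} (hg : ∀ k ≤ n, Integrable fun x : ℝ => x ^ k • g x) (ξ : ℝ) :
    ‖iteratedDeriv n (𝓕 g) ξ‖ ≤ (2 * π) ^ n * ∫ x, |x| ^ n * ‖g x‖ := by
  rw [iteratedDeriv_fourier (N := n) (fun k hk => hg k (mod_cast hk)) le_rfl,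
    ← integral_const_mul]
  refine (VectorFourier.norm_fourierIntegral_le_integral_norm _ _ _ _ _).trans_eq ?_
  congr 1 with x
  simp [norm_smul, abs_of_pos pi_pos, mul_pow, mul_assoc]

theorem norm_iteratedDeriv_fourier_le_of_integrable_gaussian_weight {E : Type*}
    [NormedAddCommGroup E] [NormedSpace ℂ E] {a : ℝ} (ha : 0 < a) (j : ℕ) {g : ℝ → E}
    (hg : ∀ k ≤ j, Integrable fun x : ℝ => x ^ k • g x)
    (hC : Integrable fun x => ‖g x‖ ^ 2 * exp (2 * a * π * x ^ 2)) (ξ : ℝ) :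
    ‖iteratedDeriv j (𝓕 g) ξ‖ ≤ (2 * π) ^ j *
      (2 ^ (-(j : ℝ)) * a ^ (-(j : ℝ) / 2) * √((2 * j - 1)‼ : ℝ) * (2 * a) ^ (-(1 : ℝ) / 4)) *
      (∫ x, ‖g x‖ ^ 2 * exp (2 * a * π * x ^ 2)) ^ (1 / 2 : ℝ) := by
  have hgm : AEStronglyMeasurable g := by simpa using (hg 0 j.zero_le).aestronglyMeasurable
  calc ‖iteratedDeriv j (𝓕 g) ξ‖ ≤ (2 * π) ^ j * ∫ x, |x| ^ j * ‖g x‖ :=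
        norm_iteratedDeriv_fourier_le hg ξ
    _ ≤ (2 * π) ^ j * ((∫ x, x ^ (2 * j) * exp (-(2 * a * π) * x ^ 2)) ^ (1 / 2 : ℝ) *
          (∫ x, ‖g x‖ ^ 2 * exp (2 * a * π * x ^ 2)) ^ (1 / 2 : ℝ)) := by
        gcongr
        exact integral_abs_pow_mul_norm_le (by positivity) j hgm hC
    _ ≤ _ := by
        rw [← mul_assoc _ _ (_ ^ (1 / 2 : ℝ))]
        gcongr
        exact sqrt_integral_pow_two_mul_mul_exp_neg_le ha j

theorem SchwartzMap.integrable_pow_smul {E : Type*} [NormedAddCommGroup E] [NormedSpace ℝ E]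
    (g : SchwartzMap ℝ E) (n : ℕ) : Integrable fun x : ℝ => x ^ n • g x := by
  refine (g.integrable_pow_mul volume n).mono' (by fun_prop)
    (Filter.Eventually.of_forall fun x => ?_)
  simp [norm_smul]

theorem SchwartzMap.fourier_fourier_apply_neg {V E : Type*} [NormedAddCommGroup V]
    [InnerProductSpace ℝ V] [FiniteDimensional ℝ V] [MeasurableSpace V] [BorelSpace V]
    [NormedAddCommGroup E] [NormedSpace ℂ E] [CompleteSpace E] (f : SchwartzMap V E) (x : V) :
    𝓕 (𝓕 (f : V → E)) (-x) = f x := by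
  rw [← fourierInv_eq_fourier_neg, ← fourier_coe, ← fourierInv_coe, fourierInv_fourier_eq]

theorem stmt_4_general (a : ℝ) (ha0 : 0 < a) (f : SchwartzMap ℝ ℂ)
    (hCf : Integrable (fun x : ℝ => ‖f x‖ ^ 2 * Real.exp (2 * a * π * x ^ 2)))
    (hCfhat : Integrable (fun ξ : ℝ =>
      ‖FourierTransform.fourier (⇑f : ℝ → ℂ) ξ‖ ^ 2 * Real.exp (2 * a * π * ξ ^ 2))) :
    ∀ j : ℕ,
      (∀ x : ℝ, ‖iteratedDeriv j (⇑f) x‖ ≤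
        (2 * π) ^ j *
          ((2 : ℝ) ^ (-(j : ℝ)) * a ^ (-(j : ℝ) / 2) *
            Real.sqrt ((Nat.doubleFactorial (2 * j - 1) : ℝ)) * (2 * a) ^ (-(1 : ℝ) / 4)) *
          (∫ ξ : ℝ, ‖FourierTransform.fourier (⇑f : ℝ → ℂ) ξ‖ ^ 2 *
            Real.exp (2 * a * π * ξ ^ 2)) ^ ((1 : ℝ) / 2)) ∧
      (∀ ξ : ℝ, ‖iteratedDeriv j (FourierTransform.fourier (⇑f : ℝ → ℂ)) ξ‖ ≤
        (2 * π) ^ j *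
          ((2 : ℝ) ^ (-(j : ℝ)) * a ^ (-(j : ℝ) / 2) *
            Real.sqrt ((Nat.doubleFactorial (2 * j - 1) : ℝ)) * (2 * a) ^ (-(1 : ℝ) / 4)) *
          (∫ x : ℝ, ‖f x‖ ^ 2 * Real.exp (2 * a * π * x ^ 2)) ^ ((1 : ℝ) / 2)) := by
  intro j
  refine ⟨fun x => ?_, norm_iteratedDeriv_fourier_le_of_integrable_gaussian_weight ha0 j
    (fun k _ => f.integrable_pow_smul k) hCf⟩
  have hinv : (f : ℝ → ℂ) = fun y => 𝓕 (𝓕 (f : ℝ → ℂ)) (-y) :=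
    funext fun y => (f.fourier_fourier_apply_neg y).symm
  conv_lhs => rw [hinv]
  rw [iteratedDeriv_comp_neg, norm_smul, norm_pow, norm_neg, norm_one, one_pow, one_mul]
  exact norm_iteratedDeriv_fourier_le_of_integrable_gaussian_weight ha0 j
    (fun k _ => (𝓕 f).integrable_pow_smul k) hCfhat (-x)

/-- uniform bounds on all derivatives of `f` and `f̂` for a Schwartz function in
the Gaussian-weighted class: `‖D^j f‖_∞ ≤ (2π)^j A_j C_a(f̂)` and
`‖D^j f̂‖_∞ ≤ (2π)^j A_j C_a(f)`, where
`A_j = 2^{-j} a^{-j/2} √((2j-1)‼) (2a)^{-1/4}`. -/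
theorem stmt_4 (a : ℝ) (ha0 : 0 < a) (ha1 : a < 1) (f : SchwartzMap ℝ ℂ)
    (hCf : Integrable (fun x : ℝ => ‖f x‖ ^ 2 * Real.exp (2 * a * π * x ^ 2)))
    (hCfhat : Integrable (fun ξ : ℝ =>
      ‖FourierTransform.fourier (⇑f : ℝ → ℂ) ξ‖ ^ 2 * Real.exp (2 * a * π * ξ ^ 2))) :
    ∀ j : ℕ,
      (∀ x : ℝ, ‖iteratedDeriv j (⇑f) x‖ ≤
        (2 * π) ^ j *
          ((2 : ℝ) ^ (-(j : ℝ)) * a ^ (-(j : ℝ) / 2) *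
            Real.sqrt ((Nat.doubleFactorial (2 * j - 1) : ℝ)) * (2 * a) ^ (-(1 : ℝ) / 4)) *
          (∫ ξ : ℝ, ‖FourierTransform.fourier (⇑f : ℝ → ℂ) ξ‖ ^ 2 *
            Real.exp (2 * a * π * ξ ^ 2)) ^ ((1 : ℝ) / 2)) ∧
      (∀ ξ : ℝ, ‖iteratedDeriv j (FourierTransform.fourier (⇑f : ℝ → ℂ)) ξ‖ ≤
        (2 * π) ^ j *
          ((2 : ℝ) ^ (-(j : ℝ)) * a ^ (-(j : ℝ) / 2) *
            Real.sqrt ((Nat.doubleFactorial (2 * j - 1) : ℝ)) * (2 * a) ^ (-(1 : ℝ) / 4)) *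
          (∫ x : ℝ, ‖f x‖ ^ 2 * Real.exp (2 * a * π * x ^ 2)) ^ ((1 : ℝ) / 2)) :=
  stmt_4_general a ha0 f hCf hCfhat
end

section
/- Let b > 0, θ₀ ∈ (0,1), and let f : ℝ → ℂ be continuously differentiable with ∫_ℝ |f(x)|² e^{2bπx²} dx < ∞ and such that |f'(x)| ≤ M e^{-θ₀ bπx²} for all x ∈ ℝ and some M > 0. Then there is a constant C > 0 such that |f(x)| ≤ C e^{-((1+θ₀)/2)·bπx²} for all x ∈ ℝ. -/
/-!
For `x ≥ 0`, the function `f * f` and its derivative `2 f f'` are integrable on `(x, ∞)`, so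
`f * f` vanishes at `+∞` and `‖f x‖² ≤ 2 ∫_x^∞ ‖f‖ ‖f'‖`. Splitting
`‖f‖ ‖f'‖ ≤ (‖f‖ e^{a t²}) (M e^{-(a + a') t²})` and applying Cauchy–Schwarz, the first factor is
controlled by the weighted `L²` norm of `f` and the second by the Gaussian tail
`∫_x^∞ e^{-c t²} ≤ e^{-c x²} √(π / c)`, which gives `‖f x‖² ≲ e^{-(a + a') x²}`.
Negative `x` follow by reflecting `f`.
-/

open MeasureTheory Real Set Filter

theorem integral_norm_mul_norm_le_sqrt {α E : Type*} [MeasurableSpace α] {μ : Measure α}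
    [NormedAddCommGroup E] {f g : α → E} (hf : MemLp f 2 μ) (hg : MemLp g 2 μ) :
    ∫ a, ‖f a‖ * ‖g a‖ ∂μ ≤ √(∫ a, ‖f a‖ ^ 2 ∂μ) * √(∫ a, ‖g a‖ ^ 2 ∂μ) := by
  have h := integral_mul_norm_le_Lp_mul_Lq (p := 2) (q := 2) .two_two
    (by simpa using hf) (by simpa using hg)
  simpa only [sqrt_eq_rpow, ← rpow_natCast, Nat.cast_ofNat] using h

theorem integral_Ioi_exp_neg_mul_sq_le {c x : ℝ} (hc : 0 < c) (hx : 0 ≤ x) :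
    ∫ t in Ioi x, exp (-c * t ^ 2) ≤ exp (-c * x ^ 2) * √(π / c) := by
  have hgauss : Integrable fun t : ℝ ↦ exp (-c * t ^ 2) := integrable_exp_neg_mul_sq hc
  have hshift : Integrable fun t ↦ exp (-c * x ^ 2) * exp (-c * (t - x) ^ 2) :=
    (hgauss.comp_sub_right x).const_mul _
  calc ∫ t in Ioi x, exp (-c * t ^ 2)
      ≤ ∫ t in Ioi x, exp (-c * x ^ 2) * exp (-c * (t - x) ^ 2) := by
        refine setIntegral_mono_on hgauss.integrableOn hshift.integrableOn measurableSet_Ioi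
          fun t ht ↦ ?_
        rw [← exp_add, exp_le_exp]
        -- `t² ≥ x² + (t - x)²` on `t ≥ x ≥ 0`
        nlinarith [mul_nonneg (mul_nonneg hc.le hx) (sub_nonneg.mpr (le_of_lt ht))]
    _ ≤ ∫ t, exp (-c * x ^ 2) * exp (-c * (t - x) ^ 2) :=
        setIntegral_le_integral hshift (.of_forall fun t ↦ by positivity)
    _ = exp (-c * x ^ 2) * √(π / c) := by
        rw [integral_const_mul, integral_sub_right_eq_self (fun t ↦ exp (-c * t ^ 2)),
          integral_gaussian]

section

variable {𝕜 : Type*} [RCLike 𝕜] {f : ℝ → 𝕜}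

theorem norm_sq_le_two_mul_integral_Ioi_norm_mul_norm_deriv (hf : Differentiable ℝ f) (x : ℝ)
    (hsq : IntegrableOn (fun t ↦ ‖f t‖ ^ 2) (Ioi x))
    (hprod : IntegrableOn (fun t ↦ ‖f t‖ * ‖deriv f t‖) (Ioi x)) :
    ‖f x‖ ^ 2 ≤ 2 * ∫ t in Ioi x, ‖f t‖ * ‖deriv f t‖ := by
  set F' : ℝ → 𝕜 := fun t ↦ deriv f t * f t + f t * deriv f t
  have hF : ∀ t, HasDerivAt (fun t ↦ f t * f t) (F' t) t :=
    fun t ↦ (hf t).hasDerivAt.mul (hf t).hasDerivAt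
  have hF'_le : ∀ t, ‖F' t‖ ≤ 2 * (‖f t‖ * ‖deriv f t‖) := fun t ↦ by
    calc ‖F' t‖ ≤ ‖deriv f t * f t‖ + ‖f t * deriv f t‖ := norm_add_le _ _
      _ = 2 * (‖f t‖ * ‖deriv f t‖) := by rw [norm_mul, norm_mul]; ring
  have hF'_int : IntegrableOn F' (Ioi x) :=
    (hprod.const_mul 2).mono'
      ((((measurable_deriv f).mul hf.continuous.measurable).add
        (hf.continuous.measurable.mul (measurable_deriv f))).aestronglyMeasurable)
      (.of_forall hF'_le)
  have hF_int : IntegrableOn (fun t ↦ f t * f t) (Ioi x) :=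
    hsq.mono' (hf.continuous.mul hf.continuous).aestronglyMeasurable.restrict
      (.of_forall fun t ↦ by simp [sq])
  have hF_lim : Tendsto (fun t ↦ f t * f t) atTop (nhds 0) :=
    tendsto_zero_of_hasDerivAt_of_integrableOn_Ioi (fun t _ ↦ hF t) hF'_int hF_int
  have hFTC : ∫ t in Ioi x, F' t = 0 - f x * f x :=
    integral_Ioi_of_hasDerivAt_of_tendsto (hf.continuous.mul hf.continuous).continuousWithinAt
      (fun t _ ↦ hF t) hF'_int hF_lim
  calc ‖f x‖ ^ 2 = ‖∫ t in Ioi x, F' t‖ := by rw [hFTC, zero_sub, norm_neg, norm_mul, sq]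
    _ ≤ ∫ t in Ioi x, ‖F' t‖ := norm_integral_le_integral_norm _
    _ ≤ ∫ t in Ioi x, 2 * (‖f t‖ * ‖deriv f t‖) :=
        setIntegral_mono hF'_int.norm (hprod.const_mul 2) hF'_le
    _ = 2 * ∫ t in Ioi x, ‖f t‖ * ‖deriv f t‖ := integral_const_mul _ _

theorem norm_sq_le_of_integrable_gaussian_weighted_of_nonneg {a a' M : ℝ} (ha : 0 ≤ a)
    (hc : 0 < a + a') (hf : Differentiable ℝ f)
    (hL2 : Integrable fun t ↦ ‖f t‖ ^ 2 * exp (2 * a * t ^ 2))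
    (hderiv : ∀ t, ‖deriv f t‖ ≤ M * exp (-a' * t ^ 2)) {x : ℝ} (hx : 0 ≤ x) :
    ‖f x‖ ^ 2 ≤ 2 * M * √((∫ t, ‖f t‖ ^ 2 * exp (2 * a * t ^ 2)) * √(π / (2 * (a + a')))) *
      exp (-(a + a') * x ^ 2) := by
  set c := a + a'
  set I := ∫ t, ‖f t‖ ^ 2 * exp (2 * a * t ^ 2)
  set u : ℝ → ℝ := fun t ↦ ‖f t‖ * exp (a * t ^ 2)
  set v : ℝ → ℝ := fun t ↦ M * exp (-c * t ^ 2)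
  have hfc := hf.continuous
  have hM : 0 ≤ M := nonneg_of_mul_nonneg_left ((norm_nonneg _).trans (hderiv 0)) (exp_pos _)
  have hu_sq : ∀ t, ‖u t‖ ^ 2 = ‖f t‖ ^ 2 * exp (2 * a * t ^ 2) := fun t ↦ by
    rw [norm_of_nonneg (by positivity), mul_pow, ← exp_nat_mul]; ring_nf
  have hv_sq : ∀ t, ‖v t‖ ^ 2 = M ^ 2 * exp (-(2 * c) * t ^ 2) := fun t ↦ by
    rw [norm_of_nonneg (by positivity), mul_pow, ← exp_nat_mul]; ring_nf
  have hprod_le : ∀ t, ‖f t‖ * ‖deriv f t‖ ≤ ‖u t‖ * ‖v t‖ := fun t ↦ by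
    have huv : ‖u t‖ * ‖v t‖ = ‖f t‖ * (M * exp (-a' * t ^ 2)) := by
      rw [norm_of_nonneg (by positivity), norm_of_nonneg (by positivity)]
      rw [show -a' * t ^ 2 = a * t ^ 2 + -c * t ^ 2 by ring, exp_add]; ring
    exact huv ▸ mul_le_mul_of_nonneg_left (hderiv t) (norm_nonneg _)
  have hu : MemLp u 2 (volume.restrict (Ioi x)) :=
    (memLp_two_iff_integrable_sq_norm (by fun_prop)).2 (by simpa only [hu_sq] using hL2.restrict)
  have hv : MemLp v 2 (volume.restrict (Ioi x)) :=
    (memLp_two_iff_integrable_sq_norm (by fun_prop)).2 <| by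
      simpa only [hv_sq] using ((integrable_exp_neg_mul_sq (by positivity)).const_mul _).restrict
  have hsq : IntegrableOn (fun t ↦ ‖f t‖ ^ 2) (Ioi x) :=
    hL2.integrableOn.mono' (by fun_prop) <| .of_forall fun t ↦ by
      rw [norm_of_nonneg (by positivity)]
      exact le_mul_of_one_le_right (by positivity) (one_le_exp (by positivity))
  have huv : Integrable (fun t ↦ ‖u t‖ * ‖v t‖) (volume.restrict (Ioi x)) := by
    simpa only [Pi.mul_apply, norm_mul] using (hu.integrable_mul hv).norm
  have hprod : IntegrableOn (fun t ↦ ‖f t‖ * ‖deriv f t‖) (Ioi x) :=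
    huv.mono'
      (hf.continuous.norm.measurable.mul (measurable_deriv f).norm).aestronglyMeasurable
      (.of_forall fun t ↦ by simpa only [norm_mul, norm_norm] using hprod_le t)
  have hI : ∫ t in Ioi x, ‖u t‖ ^ 2 ≤ I := by
    simp only [hu_sq]
    exact setIntegral_le_integral hL2 (.of_forall fun t ↦ by positivity)
  have hV : ∫ t in Ioi x, ‖v t‖ ^ 2 ≤ (M * exp (-c * x ^ 2)) ^ 2 * √(π / (2 * c)) := by
    have hexp : exp (-c * x ^ 2) ^ 2 = exp (-(2 * c) * x ^ 2) := by
      rw [← exp_nat_mul]; ring_nf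
    simp only [hv_sq, integral_const_mul, mul_pow, hexp, mul_assoc]
    exact mul_le_mul_of_nonneg_left (integral_Ioi_exp_neg_mul_sq_le (by positivity) hx)
      (sq_nonneg M)
  calc ‖f x‖ ^ 2 ≤ 2 * ∫ t in Ioi x, ‖f t‖ * ‖deriv f t‖ :=
        norm_sq_le_two_mul_integral_Ioi_norm_mul_norm_deriv hf x hsq hprod
    _ ≤ 2 * ∫ t in Ioi x, ‖u t‖ * ‖v t‖ :=
        mul_le_mul_of_nonneg_left (setIntegral_mono hprod huv hprod_le) zero_le_two
    _ ≤ 2 * (√(∫ t in Ioi x, ‖u t‖ ^ 2) * √(∫ t in Ioi x, ‖v t‖ ^ 2)) := by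
        gcongr; exact integral_norm_mul_norm_le_sqrt hu hv
    _ ≤ 2 * (√I * √((M * exp (-c * x ^ 2)) ^ 2 * √(π / (2 * c)))) := by gcongr
    _ = 2 * M * √(I * √(π / (2 * c))) * exp (-c * x ^ 2) := by
        rw [sqrt_mul' _ (sqrt_nonneg _), sqrt_sq (by positivity),
          sqrt_mul (integral_nonneg fun t ↦ by positivity)]
        ring

theorem norm_sq_le_of_integrable_gaussian_weighted {a a' M : ℝ} (ha : 0 ≤ a) (hc : 0 < a + a')
    (hf : Differentiable ℝ f) (hL2 : Integrable fun t ↦ ‖f t‖ ^ 2 * exp (2 * a * t ^ 2))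
    (hderiv : ∀ t, ‖deriv f t‖ ≤ M * exp (-a' * t ^ 2)) (x : ℝ) :
    ‖f x‖ ^ 2 ≤ 2 * M * √((∫ t, ‖f t‖ ^ 2 * exp (2 * a * t ^ 2)) * √(π / (2 * (a + a')))) *
      exp (-(a + a') * x ^ 2) := by
  rcases le_total 0 x with hx | hx
  · exact norm_sq_le_of_integrable_gaussian_weighted_of_nonneg ha hc hf hL2 hderiv hx
  have hL2_neg : Integrable fun t ↦ ‖f (-t)‖ ^ 2 * exp (2 * a * t ^ 2) := by
    simpa only [neg_sq] using hL2.comp_neg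
  have hderiv_neg : ∀ t, ‖deriv (fun t ↦ f (-t)) t‖ ≤ M * exp (-a' * t ^ 2) := fun t ↦ by
    simpa only [deriv_comp_neg, norm_neg, neg_sq] using hderiv (-t)
  have hI : ∫ t, ‖f (-t)‖ ^ 2 * exp (2 * a * t ^ 2) = ∫ t, ‖f t‖ ^ 2 * exp (2 * a * t ^ 2) := by
    rw [← integral_neg_eq_self (fun t ↦ ‖f t‖ ^ 2 * exp (2 * a * t ^ 2))]
    simp only [neg_sq]
  simpa only [neg_neg, neg_sq, hI] using
    norm_sq_le_of_integrable_gaussian_weighted_of_nonneg (f := fun t ↦ f (-t)) ha hc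
      (hf.comp differentiable_neg) hL2_neg hderiv_neg (neg_nonneg.2 hx)

end

theorem stmt_8_general (b θ₀ M : ℝ) (hb : 0 < b) (hθ0 : 0 < θ₀)
    (f : ℝ → ℂ) (hf : ContDiff ℝ 1 f)
    (hL2 : Integrable (fun x : ℝ => ‖f x‖ ^ 2 * Real.exp (2 * b * π * x ^ 2)))
    (hderiv : ∀ x : ℝ, ‖deriv f x‖ ≤ M * Real.exp (-θ₀ * b * π * x ^ 2)) :
    ∃ C > 0, ∀ x : ℝ, ‖f x‖ ≤ C * Real.exp (-((1 + θ₀) / 2) * b * π * x ^ 2) := by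
  set D := 2 * M * √((∫ t, ‖f t‖ ^ 2 * exp (2 * (b * π) * t ^ 2)) *
    √(π / (2 * (b * π + θ₀ * b * π))))
  have hsq (x : ℝ) : ‖f x‖ ^ 2 ≤ D * exp (-(b * π + θ₀ * b * π) * x ^ 2) :=
    norm_sq_le_of_integrable_gaussian_weighted (by positivity) (by positivity)
      (hf.differentiable one_ne_zero) (by simpa only [mul_assoc] using hL2)
      (fun t ↦ by simpa only [neg_mul] using hderiv t) x
  refine ⟨√D + 1, by positivity, fun x ↦ ?_⟩
  have hexp : exp (-(b * π + θ₀ * b * π) * x ^ 2) = exp (-((1 + θ₀) / 2) * b * π * x ^ 2) ^ 2 := by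
    rw [← exp_nat_mul]; ring_nf
  calc ‖f x‖ ≤ √D * exp (-((1 + θ₀) / 2) * b * π * x ^ 2) := by
        rw [← sqrt_sq (norm_nonneg _), ← sqrt_sq (exp_nonneg _), ← sqrt_mul' _ (sq_nonneg _),
          ← hexp]
        exact sqrt_le_sqrt (hsq x)
    _ ≤ (√D + 1) * exp (-((1 + θ₀) / 2) * b * π * x ^ 2) := by gcongr; linarith

/-- one step of the bootstrap: an `L²` Gaussian bound for `f` together with a
pointwise Gaussian bound of exponent `θ₀bπ` for `f'` upgrades to a pointwise Gaussian bound for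
`f` of exponent `((1+θ₀)/2)bπ`. -/
theorem stmt_8 (b θ₀ M : ℝ) (hb : 0 < b) (hθ0 : 0 < θ₀) (hθ1 : θ₀ < 1) (hM : 0 < M)
    (f : ℝ → ℂ) (hf : ContDiff ℝ 1 f)
    (hL2 : Integrable (fun x : ℝ => ‖f x‖ ^ 2 * Real.exp (2 * b * π * x ^ 2)))
    (hderiv : ∀ x : ℝ, ‖deriv f x‖ ≤ M * Real.exp (-θ₀ * b * π * x ^ 2)) :
    ∃ C > 0, ∀ x : ℝ, ‖f x‖ ≤ C * Real.exp (-((1 + θ₀) / 2) * b * π * x ^ 2) :=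
  stmt_8_general b θ₀ M hb hθ0 f hf hL2 hderiv
end

section
/- Let b > 0, 0 < θ ≤ α, and let f : ℝ → ℂ be twice continuously differentiable with |f(x)| ≤ C₁ e^{-α·bπx²} and |f''(x)| ≤ C₂ e^{-θ·bπx²} for all x ∈ ℝ. Then there is a constant C > 0 such that |f'(x)| ≤ C e^{-((α+θ)/2)·bπx²} for all x ∈ ℝ. -/
/-!
Landau's interpolation: Taylor's formula with remainder gives
`|h| ‖f' x‖ ≤ ‖f (x + h)‖ + ‖f x‖ + h² sup ‖f''‖` on `[x, x + h]`. Stepping away from the origin,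
both Gaussian bounds may be evaluated at `x`, and the step `|h| = exp (-(α - θ)/2 · bπx²)`
balances `e^{-αbπx²}/|h|` against `e^{-θbπx²}|h|`, each becoming `e^{-(α+θ)/2 · bπx²}`.
-/

open Real Set

section Taylor

variable {E : Type*} [NormedAddCommGroup E] [NormedSpace ℝ E] {f : ℝ → E}

theorem norm_sub_sub_smul_deriv_le (hf : Differentiable ℝ f) (hf' : Differentiable ℝ (deriv f))
    {x h M : ℝ} (hM : ∀ y ∈ uIcc x (x + h), ‖deriv (deriv f) y‖ ≤ M) :
    ‖f (x + h) - f x - h • deriv f x‖ ≤ M * h ^ 2 := by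
  have hderiv : ∀ t ∈ uIcc x (x + h), ‖deriv f t - deriv f x‖ ≤ M * |h| := by
    intro t ht
    calc ‖deriv f t - deriv f x‖ ≤ M * ‖t - x‖ :=
          (convex_uIcc x (x + h)).norm_image_sub_le_of_norm_deriv_le
            (fun y _ => hf' y) hM left_mem_uIcc ht
      _ ≤ M * |h| := by
          have hM0 : 0 ≤ M := (norm_nonneg _).trans (hM x left_mem_uIcc)
          have : |t - x| ≤ |h| := by
            simpa using abs_sub_left_of_mem_uIcc ht
          exact mul_le_mul_of_nonneg_left this hM0
  have hg : ∀ t, HasDerivAt (fun t => f t - t • deriv f x) (deriv f t - deriv f x) t := fun t => by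
    simpa using (hf t).hasDerivAt.fun_sub ((hasDerivAt_id t).smul_const (deriv f x))
  have := (convex_uIcc x (x + h)).norm_image_sub_le_of_norm_hasDerivWithin_le
    (fun t _ => (hg t).hasDerivWithinAt) hderiv left_mem_uIcc right_mem_uIcc
  calc ‖f (x + h) - f x - h • deriv f x‖
      = ‖(f (x + h) - (x + h) • deriv f x) - (f x - x • deriv f x)‖ := by
        congr 1; rw [add_smul]; abel
    _ ≤ M * |h| * ‖x + h - x‖ := this
    _ = M * h ^ 2 := by simp [mul_assoc, ← sq]

theorem sq_le_sq_of_mem_uIcc_add {x h y : ℝ} (hxh : 0 ≤ x * h) (hy : y ∈ uIcc x (x + h)) :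
    x ^ 2 ≤ y ^ 2 := by
  rcases mem_uIcc.mp hy with ⟨h₁, h₂⟩ | ⟨h₁, h₂⟩ <;> rcases le_total 0 x with hx | hx <;>
    nlinarith

theorem norm_deriv_le_of_norm_le_outside (hf : Differentiable ℝ f)
    (hf' : Differentiable ℝ (deriv f)) {x A B ε : ℝ} (hε : 0 < ε)
    (hA : ∀ y, x ^ 2 ≤ y ^ 2 → ‖f y‖ ≤ A) (hB : ∀ y, x ^ 2 ≤ y ^ 2 → ‖deriv (deriv f) y‖ ≤ B) :
    ‖deriv f x‖ ≤ 2 * A / ε + B * ε := by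
  -- stepping away from the origin keeps the segment `[x, x + h]` where the bounds hold
  obtain ⟨h, hh, hxh⟩ : ∃ h : ℝ, |h| = ε ∧ 0 ≤ x * h := by
    rcases le_total 0 x with hx | hx
    · exact ⟨ε, abs_of_pos hε, by positivity⟩
    · exact ⟨-ε, by simp [abs_of_pos hε], by nlinarith⟩
  have hrem := norm_sub_sub_smul_deriv_le hf hf'
    fun y hy => hB y (sq_le_sq_of_mem_uIcc_add hxh hy)
  have hstep : ε * ‖deriv f x‖ ≤ 2 * A + B * ε ^ 2 := by
    have htri := norm_sub_le (f (x + h) - f x) (f (x + h) - f x - h • deriv f x)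
    rw [sub_sub_cancel, norm_smul, Real.norm_eq_abs, hh] at htri
    have := norm_sub_le (f (x + h)) (f x)
    have := hA (x + h) (sq_le_sq_of_mem_uIcc_add hxh right_mem_uIcc)
    have := hA x le_rfl
    rw [← sq_abs h, hh] at hrem
    linarith
  rw [div_add' _ _ _ hε.ne', le_div_iff₀ hε]
  linarith

end Taylor

theorem norm_le_of_gaussian_bound {E : Type*} [NormedAddCommGroup E] {g : ℝ → E} {C k : ℝ}
    (hk : k ≤ 0) (hg : ∀ y, ‖g y‖ ≤ C * exp (k * y ^ 2)) {x y : ℝ} (hxy : x ^ 2 ≤ y ^ 2) :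
    ‖g y‖ ≤ max C 0 * exp (k * x ^ 2) :=
  calc ‖g y‖ ≤ C * exp (k * y ^ 2) := hg y
    _ ≤ max C 0 * exp (k * x ^ 2) := by
      refine mul_le_mul (le_max_left _ _) (exp_le_exp.mpr ?_) (exp_pos _).le (le_max_right _ _)
      nlinarith

/-- the Taylor-expansion interpolation step of the bootstrap: Gaussian bounds of
exponents `αbπ` for `f` and `θbπ` for `f''` give a Gaussian bound of exponent `((α+θ)/2)bπ`
for `f'`. -/
theorem stmt_9 (b θ α C₁ C₂ : ℝ) (hb : 0 < b) (hθ : 0 < θ) (hθα : θ ≤ α)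
    (f : ℝ → ℂ) (hf : ContDiff ℝ 2 f)
    (h0 : ∀ x : ℝ, ‖f x‖ ≤ C₁ * Real.exp (-α * b * π * x ^ 2))
    (h2 : ∀ x : ℝ, ‖deriv (deriv f) x‖ ≤ C₂ * Real.exp (-θ * b * π * x ^ 2)) :
    ∃ C > 0, ∀ x : ℝ, ‖deriv f x‖ ≤ C * Real.exp (-((α + θ) / 2) * b * π * x ^ 2) := by
  have hf' : Differentiable ℝ (deriv f) := (hf.deriv' (n := 1)).differentiable one_ne_zero
  have hαbπ : 0 < α * b * π := by have := hθ.trans_le hθα; positivity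
  have hθbπ : 0 < θ * b * π := by positivity
  refine ⟨2 * max C₁ 0 + max C₂ 0 + 1, by positivity, fun x => ?_⟩
  have key := norm_deriv_le_of_norm_le_outside (x := x) (hf.differentiable two_ne_zero) hf'
    (exp_pos (-((α - θ) / 2) * b * π * x ^ 2))
    (fun _ => norm_le_of_gaussian_bound (by linarith) h0)
    (fun _ => norm_le_of_gaussian_bound (by linarith) h2)
  calc ‖deriv f x‖
        ≤ 2 * (max C₁ 0 * exp (-α * b * π * x ^ 2)) / exp (-((α - θ) / 2) * b * π * x ^ 2)
          + max C₂ 0 * exp (-θ * b * π * x ^ 2) * exp (-((α - θ) / 2) * b * π * x ^ 2) := key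
    _ = (2 * max C₁ 0 + max C₂ 0) * exp (-((α + θ) / 2) * b * π * x ^ 2) := by
      rw [mul_div_assoc, mul_div_assoc, ← exp_sub, mul_assoc _ (exp _), ← exp_add]
      ring_nf
    _ ≤ (2 * max C₁ 0 + max C₂ 0 + 1) * exp (-((α + θ) / 2) * b * π * x ^ 2) :=
      mul_le_mul_of_nonneg_right (by linarith) (exp_pos _).le
end

section
/- Fix an integer k ≥ 1. Define θ : {0,…,k} × ℕ → ℝ by θ(j,0) = 1/2 for all j, and for ℓ ≥ 1: θ(0,ℓ) = 1/2 + θ(1,ℓ-1)/2; θ(j,ℓ) = θ(j-1,ℓ)/2 + θ(j+1,ℓ-1)/2 for 1 ≤ j ≤ k-1; θ(k,ℓ) = θ(k-1,ℓ)/2 + 1/4. Then the limit lim_{ℓ→∞} θ(0,ℓ) exists and equals (2k+3)/(2k+4). -/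
open Filter

/-- the depth-`k` bootstrap recurrence satisfies
`lim_{ℓ→∞} θ(0,ℓ) = (2k+3)/(2k+4)`. -/
theorem stmt_11 (k : ℕ) (hk : 1 ≤ k) (θ : ℕ → ℕ → ℝ)
    (hθ0 : ∀ j ≤ k, θ j 0 = 1 / 2)
    (hθa : ∀ ℓ : ℕ, θ 0 (ℓ + 1) = 1 / 2 + θ 1 ℓ / 2)
    (hθb : ∀ ℓ : ℕ, ∀ j : ℕ, 1 ≤ j → j ≤ k - 1 →
      θ j (ℓ + 1) = θ (j - 1) (ℓ + 1) / 2 + θ (j + 1) ℓ / 2)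
    (hθc : ∀ ℓ : ℕ, θ k (ℓ + 1) = θ (k - 1) (ℓ + 1) / 2 + 1 / 4) :
    Tendsto (fun ℓ : ℕ => θ 0 ℓ) atTop
      (nhds ((2 * (k : ℝ) + 3) / (2 * (k : ℝ) + 4))) := by
  have hK : (0:ℝ) < 2*(k:ℝ) + 4 := by positivity
  set a : ℕ → ℝ := fun j => (2*(k:ℝ)+3 - j) / (2*(k:ℝ)+4) with ha
  set c : ℝ := 1 - (1/2:ℝ)^(k+1) with hc
  have hc0 : 0 ≤ c := by
    have : (1/2:ℝ)^(k+1) ≤ 1 := pow_le_one₀ (by norm_num) (by norm_num)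
    simp only [hc]; linarith
  have hc1 : c < 1 := by
    have : (0:ℝ) < (1/2:ℝ)^(k+1) := by positivity
    simp only [hc]; linarith
  -- main contraction bound
  have key : ∀ ℓ, ∀ j ≤ k, |θ j ℓ - a j| ≤ c^ℓ := by
    intro ℓ
    induction ℓ with
    | zero =>
      intro j hj
      rw [hθ0 j hj, pow_zero]
      have hjk : (j:ℝ) ≤ k := Nat.cast_le.mpr hj
      have hj0 : (0:ℝ) ≤ j := Nat.cast_nonneg j
      have h1 : 0 ≤ a j := by
        apply div_nonneg _ hK.le; linarith
      have h2 : a j ≤ 1 := by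
        rw [ha, div_le_one hK]; linarith
      rw [abs_le]; constructor <;> linarith
    | succ ℓ ih =>
      have hcl : (0:ℝ) ≤ c^ℓ := pow_nonneg hc0 ℓ
      have step : ∀ j ≤ k, |θ j (ℓ+1) - a j| ≤ (1 - (1/2:ℝ)^(j+1)) * c^ℓ := by
        intro j
        induction j with
        | zero =>
          intro _
          have ha0 : a 0 = 1/2 + a 1 / 2 := by
            simp only [ha]; push_cast; field_simp; ring
          have h1 : θ 0 (ℓ+1) - a 0 = (θ 1 ℓ - a 1)/2 := by
            rw [hθa, ha0]; ring
          rw [h1, abs_div]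
          have := ih 1 hk
          rw [abs_of_pos (by norm_num : (0:ℝ) < 2)]
          nlinarith [abs_nonneg (θ 1 ℓ - a 1)]
        | succ j ihj =>
          intro hj1
          have hjk : j ≤ k := Nat.le_of_succ_le hj1
          have hprev := ihj hjk
          have hmono : (1 - (1/2:ℝ)^(j+1)) / 2 + 1/2 ≤ 1 - (1/2:ℝ)^(j+2) := by
            have : (1/2:ℝ)^(j+2) = (1/2:ℝ)^(j+1) / 2 := by ring
            rw [this]; ring_nf; linarith [pow_nonneg (by norm_num : (0:ℝ) ≤ 1/2) (j+1)]
          by_cases hje : j + 1 = k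
          · -- boundary case j+1 = k
            have hrec := hθc ℓ
            have hk1 : k - 1 = j := by omega
            rw [hk1, ← hje] at hrec
            have haeq : a (j+1) = a j / 2 + 1/4 := by
              have hje' : ((j:ℝ)) + 1 = (k:ℝ) := by exact_mod_cast congrArg (Nat.cast : ℕ → ℝ) hje
              simp only [ha]; push_cast; field_simp; nlinarith [hje']
            have heq : θ (j+1) (ℓ+1) - a (j+1) = (θ j (ℓ+1) - a j)/2 := by
              rw [hrec, haeq]; ring
            rw [heq, abs_div, abs_of_pos (by norm_num : (0:ℝ) < 2)]
            have hp2 : (0:ℝ) ≤ (1/2:ℝ)^(j+2) := by positivity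
            nlinarith [abs_nonneg (θ j (ℓ+1) - a j)]
          · -- interior case
            have hjle : j + 1 ≤ k - 1 := by omega
            have hrec := hθb ℓ (j+1) (Nat.le_add_left 1 j) hjle
            simp only [Nat.add_sub_cancel] at hrec
            have haeq : a (j+1) = a j / 2 + a (j+2) / 2 := by
              simp only [ha]; push_cast; field_simp; ring
            have heq : θ (j+1) (ℓ+1) - a (j+1)
                = (θ j (ℓ+1) - a j)/2 + (θ (j+2) ℓ - a (j+2))/2 := by
              rw [hrec, haeq]; ring
            have h2k : j + 2 ≤ k := by omega
            have hih2 := ih (j+2) h2k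
            calc |θ (j+1) (ℓ+1) - a (j+1)|
                ≤ |(θ j (ℓ+1) - a j)/2| + |(θ (j+2) ℓ - a (j+2))/2| := by
                  rw [heq]; exact abs_add_le _ _
              _ ≤ (1 - (1/2:ℝ)^(j+1)) * c^ℓ / 2 + c^ℓ / 2 := by
                  rw [abs_div, abs_div, abs_of_pos (by norm_num : (0:ℝ) < 2)]
                  gcongr
              _ ≤ (1 - (1/2:ℝ)^(j+1+1)) * c^ℓ := by nlinarith
      intro j hj
      have h1 := step j hj
      have h2 : (1 - (1/2:ℝ)^(j+1)) ≤ c := by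
        have : (1/2:ℝ)^(k+1) ≤ (1/2:ℝ)^(j+1) :=
          pow_le_pow_of_le_one (by norm_num) (by norm_num) (by omega)
        simp only [hc]; linarith
      calc |θ j (ℓ+1) - a j| ≤ (1 - (1/2:ℝ)^(j+1)) * c^ℓ := h1
        _ ≤ c * c^ℓ := by gcongr
        _ = c^(ℓ+1) := by ring
  have h0 : Tendsto (fun ℓ => θ 0 ℓ - a 0) atTop (nhds 0) :=
    squeeze_zero_norm (fun ℓ => key ℓ 0 (Nat.zero_le k))
      (tendsto_pow_atTop_nhds_zero_of_lt_one hc0 hc1)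
  have h2 : Tendsto (fun ℓ => θ 0 ℓ) atTop (nhds (a 0)) := by
    have := h0.add_const (a 0)
    simpa using this
  have ha0 : a 0 = (2 * (k:ℝ) + 3) / (2 * (k:ℝ) + 4) := by
    simp [ha]
  rwa [ha0] at h2
end

section
/- For every integer k ≥ 0, with λ_j = cos(jπ/(k+2)) and α² = Σ_{j=1}^{k+1} sin²(jπ/(k+2)), one has the identity (1/(2α²)) · Σ_{j=1}^{k+1} h(j) · sin²(jπ/(k+2))/(1 - λ_j) = (2k+3)/(2k+4), where h(j) = 3/2 if j is odd and h(j) = 1/2 if j is even. -/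
open Real Finset

/-
With n = k + 2 and θ_j = jπ/n, one has sin²θ_j / (1 - cos θ_j) = 1 + cos θ_j and
h(j) = 1 - (-1)^j / 2, while (-1)^j cos θ_j = cos(j(n+1)π/n). So both sums reduce to sums
∑_{j<n} cos(jmπ/n) with m ∈ {1, 2, n+1}, and the Dirichlet-kernel identity evaluates each as
(1 - (-1)^m)/2 when 0 < m < 2n. This gives α² = n/2 and ∑ h(j)(1 + cos θ_j) = n - 1/2.
-/

lemma sin_sq_div_one_sub_cos {x : ℝ} (hx : cos x ≠ 1) : sin x ^ 2 / (1 - cos x) = 1 + cos x := by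
  rw [div_eq_iff (sub_ne_zero.mpr hx.symm), sin_sq]
  ring

lemma cos_nat_mul_pi_div_ne_one {n j : ℕ} (hj : 0 < j) (hjn : j < n) : cos (j * π / n) ≠ 1 := by
  have hn : (0 : ℝ) < n := by exact_mod_cast hj.trans hjn
  have hjn' : (j : ℝ) < n := by exact_mod_cast hjn
  have hpos : 0 < j * π / n := by positivity
  rw [Ne, cos_eq_one_iff_of_lt_of_lt (by linarith [pi_pos]) ?_]
  · exact hpos.ne'
  · rw [div_lt_iff₀ hn]
    nlinarith [pi_pos]

lemma ite_odd_eq_one_sub_neg_one_pow_div_two (j : ℕ) :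
    (if Odd j then (3 : ℝ) / 2 else 1 / 2) = 1 - (-1) ^ j / 2 := by
  rcases j.even_or_odd with hj | hj
  · rw [if_neg (Nat.not_odd_iff_even.mpr hj), hj.neg_one_pow]
    norm_num
  · rw [if_pos hj, hj.neg_one_pow]
    norm_num

lemma sum_range_cos_mul_nat_mul_pi_div {n m : ℕ} (hm : 0 < m) (hmn : m < 2 * n) :
    ∑ j ∈ range n, cos (m * π / n * j) = (1 - (-1) ^ m) / 2 := by
  have hn : (n : ℝ) ≠ 0 := Nat.cast_ne_zero.mpr (by omega)
  have hsin : sin (m * π / n / 2) ≠ 0 := by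
    refine (sin_pos_of_pos_of_lt_pi (by positivity) ?_).ne'
    rw [div_div, div_lt_iff₀ (by positivity)]
    have : (m : ℝ) < 2 * n := by exact_mod_cast hmn
    nlinarith [pi_pos]
  have h := sin_mul_sum_cos n (m * π / n) 0
  simp only [add_zero] at h
  rw [show n * (m * π / n) / 2 = m * π / 2 by field_simp,
    show (n - 1 : ℝ) * (m * π / n) / 2 = m * π / 2 - m * π / n / 2 by field_simp,
    cos_sub] at h
  have hsin_mul_cos : sin (m * π / 2) * cos (m * π / 2) = 0 := by
    have h2 := sin_two_mul (m * π / 2)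
    rw [show 2 * (m * π / 2) = m * π by ring, sin_nat_mul_pi] at h2
    linarith
  have hsin_sq : sin (m * π / 2) ^ 2 = (1 - (-1) ^ m) / 2 := by
    rw [sin_sq_eq_half_sub, show 2 * (m * π / 2) = m * π by ring, cos_nat_mul_pi]
    ring
  apply mul_left_cancel₀ hsin
  linear_combination h + cos (m * π / n / 2) * hsin_mul_cos + sin (m * π / n / 2) * hsin_sq

lemma sum_range_sin_sq_nat_mul_pi_div {n : ℕ} (hn : 2 ≤ n) :
    ∑ j ∈ range n, sin (j * π / n) ^ 2 = n / 2 := by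
  have hcos : ∑ j ∈ range n, cos (2 * (j * π / n)) = 0 := by
    have h := sum_range_cos_mul_nat_mul_pi_div (n := n) (m := 2) two_pos (by omega)
    norm_num at h
    rw [← h]
    exact sum_congr rfl fun j _ => by ring_nf
  simp only [sin_sq_eq_half_sub, sum_sub_distrib, sum_const, card_range, nsmul_eq_mul,
    ← sum_div, hcos]
  ring

lemma sum_range_one_sub_neg_one_pow_mul_one_add_cos {n : ℕ} (hn : 2 ≤ n) :
    ∑ j ∈ range n, (1 - (-1) ^ j / 2) * (1 + cos (j * π / n)) = n + 1 / 2 := by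
  have hcos : ∑ j ∈ range n, cos (j * π / n) = 1 := by
    have h := sum_range_cos_mul_nat_mul_pi_div (n := n) (m := 1) one_pos (by omega)
    norm_num at h
    rw [← h]
    exact sum_congr rfl fun j _ => by ring_nf
  have hcos_alt : ∑ j ∈ range n, (-1) ^ j * cos (j * π / n) = (1 + (-1) ^ n) / 2 := by
    have h := sum_range_cos_mul_nat_mul_pi_div (n := n) (m := n + 1) (by omega) (by omega)
    rw [pow_succ] at h
    rw [show (1 + (-1) ^ n) / 2 = (1 - (-1) ^ n * (-1 : ℝ)) / 2 by ring, ← h]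
    refine sum_congr rfl fun j _ => ?_
    rw [← cos_add_nat_mul_pi]
    congr 1
    push_cast
    field_simp
    ring
  have hgeom : ∑ j ∈ range n, (-1 : ℝ) ^ j = (1 - (-1) ^ n) / 2 := by
    rw [geom_sum_eq (by norm_num)]
    ring
  simp only [sub_mul, one_mul, div_mul_eq_mul_div, mul_add, mul_one, sum_sub_distrib,
    sum_add_distrib, ← sum_div, sum_const, card_range, nsmul_eq_mul, hcos, hcos_alt, hgeom]
  ring

lemma sum_Ico_sin_sq_nat_mul_pi_div {n : ℕ} (hn : 2 ≤ n) :
    ∑ j ∈ Ico 1 n, sin (j * π / n) ^ 2 = n / 2 := by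
  simpa [sum_range_eq_add_Ico _ (by omega : 0 < n)] using sum_range_sin_sq_nat_mul_pi_div hn

lemma sum_Ico_ite_odd_mul_sin_sq_div_one_sub_cos {n : ℕ} (hn : 2 ≤ n) :
    ∑ j ∈ Ico 1 n, (if Odd j then (3 : ℝ) / 2 else 1 / 2) *
      sin (j * π / n) ^ 2 / (1 - cos (j * π / n)) = (n : ℝ) - 1 / 2 := by
  have h := sum_range_one_sub_neg_one_pow_mul_one_add_cos hn
  rw [sum_range_eq_add_Ico _ (by omega)] at h
  rw [sum_congr rfl fun j hj => by
    rw [mul_div_assoc, ite_odd_eq_one_sub_neg_one_pow_div_two,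
      sin_sq_div_one_sub_cos (cos_nat_mul_pi_div_ne_one (mem_Ico.mp hj).1 (mem_Ico.mp hj).2)]]
  norm_num at h
  linarith

/-- the trigonometric identity evaluating the asymptotic gain of the depth-`k`
bootstrap algorithm:
`(1/(2α²)) ∑_{j=1}^{k+1} h(j) sin²(jπ/(k+2))/(1 - cos(jπ/(k+2))) = (2k+3)/(2k+4)`,
where `α² = ∑_{j=1}^{k+1} sin²(jπ/(k+2))` and `h(j) = 3/2` for odd `j`, `1/2` for even `j`. -/
theorem stmt_13 (k : ℕ) :
    (1 / (2 * ∑ j ∈ Finset.Icc 1 (k + 1), Real.sin ((j : ℝ) * π / (k + 2)) ^ 2)) *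
      ∑ j ∈ Finset.Icc 1 (k + 1),
        (if Odd j then (3 : ℝ) / 2 else 1 / 2) *
          Real.sin ((j : ℝ) * π / (k + 2)) ^ 2 / (1 - Real.cos ((j : ℝ) * π / (k + 2))) =
    (2 * (k : ℝ) + 3) / (2 * (k : ℝ) + 4) := by
  have hn : 2 ≤ k + 2 := by omega
  have hα := sum_Ico_sin_sq_nat_mul_pi_div hn
  have hgain := sum_Ico_ite_odd_mul_sin_sq_div_one_sub_cos hn
  push_cast at hα hgain
  rw [show Icc 1 (k + 1) = Ico 1 (k + 2) from rfl, hα, hgain]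
  field_simp
  ring
end
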